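/- arXiv:2007.13864 — 7 statements merged into one kernel-verified Lean document; each statement's English description precedes it below -/
import Mathlib

section
/- Let n, k, m be integers with n ≥ m ≥ 1 and k ≥ 0. Then for all x ∈ ℝ, the m-th derivative of the polynomial B≥_{n,k} satisfies d^m/dx^m B≥_{n,k}(x) = (n)_m · Σ_{j=1}^{m} (−1)^{j+m} · C(m−1, j−1) · B=_{n−m, k−j}(x). -/
/-- `B≥_{n,k}(x) = Σ_{j=k}^{n} C(n,j)·x^j·(1−x)^{n−j}`. -/
noncomputable def Bge (n k : ℕ) (x : ℝ) : ℝ :=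
  ∑ j ∈ Finset.Icc k n, (n.choose j : ℝ) * x ^ j * (1 - x) ^ (n - j)

/-- `B=_{n,k}(x) = C(n,k)·x^k·(1−x)^{n−k}`, with the convention that it is `0`
when `k < 0` (and automatically `0` when `k > n` since the binomial coefficient vanishes). -/
noncomputable def Beq (n : ℕ) (k : ℤ) (x : ℝ) : ℝ :=
  if 0 ≤ k then (n.choose k.toNat : ℝ) * x ^ k.toNat * (1 - x) ^ (n - k.toNat) else 0

/-!
`B=_{n,k}` is the Bernstein polynomial, whose derivative is `n (B=_{n-1,k-1} - B=_{n-1,k})`: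
`n` times the backward difference in `k` of `B=_{n-1,·}`. Summing over `k ≥ k₀` telescopes, so
`(B≥_{n,k})' = n B=_{n-1,k-1}`. Differentiation in `x` commutes with differences in `k`, so the
`r`-th derivative of `B=_{n,·}` is `(n)_r` times the `r`-th backward difference of `B=_{n-r,·}`,
and expanding that difference binomially gives the stated sum.
-/

open Finset fwdDiff

theorem hasDerivAt_fwdDiff_iter {𝕜 F M : Type*} [NontriviallyNormedField 𝕜]
    [NormedAddCommGroup F] [NormedSpace 𝕜 F] [AddCommMonoid M] (h : M) {f : 𝕜 → M → F}
    {f' : M → F} {x : 𝕜} (hf : ∀ j, HasDerivAt (fun y ↦ f y j) (f' j) x) (r : ℕ) (k : M) :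
    HasDerivAt (fun y ↦ (Δ_[h])^[r] (f y) k) ((Δ_[h])^[r] f' k) x := by
  induction r generalizing k with
  | zero => exact hf k
  | succ r ih =>
    simp only [Function.iterate_succ_apply', fwdDiff]
    exact (ih (k + h)).sub (ih k)

theorem fwdDiff_neg_one_iter_eq_sum {G : Type*} [AddCommGroup G] (g : ℤ → G) (r : ℕ) (k : ℤ) :
    (Δ_[-1])^[r] g k = ∑ i ∈ range (r + 1), ((-1 : ℤ) ^ (i + r) * r.choose i) • g (k - i) := by
  rw [fwdDiff_iter_eq_sum_shift]
  refine sum_congr rfl fun i hi ↦ ?_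
  have hir : i + r = (r - i) + 2 * i := by grind
  rw [hir, pow_add, pow_mul, neg_one_sq, one_pow, mul_one, smul_neg, nsmul_one, ← sub_eq_add_neg]

theorem Beq_natCast_eq_eval (n a : ℕ) (x : ℝ) :
    Beq n a x = (bernsteinPolynomial ℝ n a).eval x := by
  simp [Beq, bernsteinPolynomial]

theorem Beq_of_neg (n : ℕ) {k : ℤ} (hk : k < 0) : Beq n k = 0 := by
  ext x
  simp [Beq, hk.not_ge]

theorem Beq_of_lt {n : ℕ} {k : ℤ} (hk : n < k) : Beq n k = 0 := by
  lift k to ℕ using by omega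
  ext x
  rw [Beq_natCast_eq_eval, bernsteinPolynomial.eq_zero_of_lt ℝ (by omega), Polynomial.eval_zero,
    Pi.zero_apply]

theorem hasDerivAt_Beq (n : ℕ) (k : ℤ) (x : ℝ) :
    HasDerivAt (Beq n k) (n * Δ_[-1] (fun j ↦ Beq (n - 1) j x) k) x := by
  rcases lt_or_ge k 0 with hk | hk
  · rw [Beq_of_neg n hk]
    simp only [fwdDiff, Beq_of_neg _ hk, Beq_of_neg _ (by omega : k + -1 < 0), Pi.zero_apply,
      sub_self, mul_zero]
    exact hasDerivAt_const x 0
  lift k to ℕ using hk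
  have hB : Beq n k = fun y ↦ (bernsteinPolynomial ℝ n k).eval y :=
    funext (Beq_natCast_eq_eval n k)
  refine hB ▸ (Polynomial.hasDerivAt _ x).congr_deriv ?_
  cases k with
  | zero =>
    simp [fwdDiff, Beq_of_neg _ (by norm_num : (-1 : ℤ) < 0), ← Beq_natCast_eq_eval,
      bernsteinPolynomial.derivative_zero]
  | succ ν =>
    simp [fwdDiff, ← Beq_natCast_eq_eval, bernsteinPolynomial.derivative_succ]

theorem iteratedDeriv_Beq (n r : ℕ) (k : ℤ) (x : ℝ) :
    iteratedDeriv r (Beq n k) x =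
      n.descFactorial r * (Δ_[-1])^[r] (fun j ↦ Beq (n - r) j x) k := by
  induction r generalizing x with
  | zero => simp
  | succ r ih =>
    have hderiv := (hasDerivAt_fwdDiff_iter (-1) (f := fun y j ↦ Beq (n - r) j y)
      (fun j ↦ hasDerivAt_Beq (n - r) j x) r k).const_mul (n.descFactorial r : ℝ)
    rw [iteratedDeriv_succ, funext ih, hderiv.deriv, Nat.descFactorial_succ,
      Function.iterate_succ_apply, Nat.sub_sub]
    change _ * (Δ_[-1])^[r] (((n - r : ℕ) : ℝ) • _) k = _
    rw [fwdDiff_iter_const_smul, Pi.smul_apply, smul_eq_mul]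
    push_cast
    ring

theorem hasDerivAt_Bge (n k : ℕ) (x : ℝ) :
    HasDerivAt (Bge n k) (n * Beq (n - 1) (k - 1) x) x := by
  have hBge : Bge n k = fun y ↦ ∑ j ∈ Icc k n, Beq n j y := by
    ext y
    simp [Bge, Beq]
  rw [hBge]
  refine (HasDerivAt.fun_sum (A := fun j : ℕ ↦ Beq n j)
    fun j _ ↦ hasDerivAt_Beq n j x).congr_deriv ?_
  rw [← mul_sum]
  rcases n with _ | n
  · simp
  congr 1
  rcases le_or_gt k (n + 1) with hk | hk
  · have htelescope := sum_Icc_sub hk (fun i : ℕ ↦ -Beq n (i - 1) x)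
    have htop : Beq n (n + 1) x = 0 := by rw [Beq_of_lt (by omega), Pi.zero_apply]
    push_cast at htelescope
    simp only [fwdDiff, ← sub_eq_add_neg, add_sub_cancel_right, htop, neg_sub_neg, neg_zero,
      zero_sub, neg_neg] at htelescope ⊢
    exact htelescope
  · rw [Icc_eq_empty_of_lt hk, sum_empty, Nat.add_sub_cancel, Beq_of_lt (by omega), Pi.zero_apply]

theorem stmt0_general (n k m : ℕ) (hm : 1 ≤ m) (x : ℝ) :
    iteratedDeriv m (Bge n k) x =
      (n.descFactorial m : ℝ) *
        ∑ j ∈ Finset.Icc 1 m, (-1 : ℝ) ^ (j + m) * ((m - 1).choose (j - 1) : ℝ) *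
          Beq (n - m) ((k : ℤ) - (j : ℤ)) x := by
  obtain ⟨r, rfl⟩ : ∃ r, m = r + 1 := ⟨m - 1, by omega⟩
  have hderiv : deriv (Bge n k) = fun y ↦ n * Beq (n - 1) (k - 1) y :=
    funext fun y ↦ (hasDerivAt_Bge n k y).deriv
  have hdescFactorial : (n : ℝ) * (n - 1).descFactorial r = n.descFactorial (r + 1) := by
    rcases n with _ | n
    · simp
    · rw [Nat.succ_descFactorial_succ, Nat.add_sub_cancel]
      push_cast
      ring
  rw [iteratedDeriv_succ', hderiv, iteratedDeriv_const_mul_field, iteratedDeriv_Beq,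
    fwdDiff_neg_one_iter_eq_sum, ← mul_assoc, hdescFactorial, Nat.sub_sub, Nat.add_sub_cancel,
    ← Ico_add_one_right_eq_Icc, sum_Ico_eq_sum_range, Nat.add_sub_cancel]
  refine congrArg _ (sum_congr rfl fun i _ ↦ ?_)
  rw [zsmul_eq_mul, Nat.add_sub_cancel_left, add_comm 1 r, sub_sub]
  push_cast
  ring

theorem stmt0 (n k m : ℕ) (hm : 1 ≤ m) (hmn : m ≤ n) (x : ℝ) :
    iteratedDeriv m (Bge n k) x =
      (n.descFactorial m : ℝ) *
        ∑ j ∈ Finset.Icc 1 m, (-1 : ℝ) ^ (j + m) * ((m - 1).choose (j - 1) : ℝ) *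
          Beq (n - m) ((k : ℤ) - (j : ℤ)) x :=
  stmt0_general n k m hm x
end

section
/- For all integers n ≥ 0 and 0 ≤ k ≤ n+1, and all x ∈ ℝ, the polynomial identity ((n+1−k)/(n+1)) · B≥_{n+1,k}(x) + (k/(n+1)) · B≥_{n+1,k+1}(x) = B≥_{n,k}(x) holds. (This is the one-step conditional-expectation identity showing that X_n = B≥_{n,R_n}(x) is a martingale for the Markov chain R_n with R_1 = 1 that stays at R_n with probability (n+1−R_n)/(n+1) and increases by 1 with probability R_n/(n+1).) -/
open Polynomial Finset

namespace bernsteinPolynomial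

variable (R : Type*) [CommRing R]

theorem succ_succ (n ν : ℕ) :
    bernsteinPolynomial R (n + 1) (ν + 1) =
      X * bernsteinPolynomial R n ν + (1 - X) * bernsteinPolynomial R n (ν + 1) := by
  rcases lt_or_ge ν n with h | h
  · obtain ⟨d, rfl⟩ : ∃ d, n = ν + 1 + d := ⟨n - (ν + 1), by omega⟩
    simp only [bernsteinPolynomial, Nat.choose_succ_succ', Nat.cast_add,
      show ν + 1 + d + 1 - (ν + 1) = d + 1 by omega, show ν + 1 + d - ν = d + 1 by omega,
      show ν + 1 + d - (ν + 1) = d by omega]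
    ring
  · rw [eq_zero_of_lt R (by omega : n < ν + 1)]
    simp only [bernsteinPolynomial, Nat.choose_succ_succ', Nat.choose_eq_zero_of_lt
      (by omega : n < ν + 1), add_zero, Nat.succ_sub_succ]
    ring

theorem natCast_add_one_sub_mul (n k : ℕ) :
    ((n : R[X]) + 1 - (k : R[X])) * bernsteinPolynomial R (n + 1) k =
      ((n : R[X]) + 1) * (1 - X) * bernsteinPolynomial R n k := by
  rcases le_or_gt k n with h | h
  · have hc := congrArg (Nat.cast : ℕ → R[X]) (Nat.choose_mul_succ_eq n k)
    push_cast [Nat.cast_sub (by omega : k ≤ n + 1)] at hc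
    simp only [bernsteinPolynomial, show n + 1 - k = n - k + 1 by omega, pow_succ]
    linear_combination -(X ^ k * (1 - X) ^ (n - k) * (1 - X)) * hc
  · rw [eq_zero_of_lt R h, mul_zero]
    rcases (Nat.succ_le_of_lt h).eq_or_lt with rfl | h'
    · push_cast; ring
    · rw [eq_zero_of_lt R h', mul_zero]

end bernsteinPolynomial

theorem Bge_eq_sum_eval (n k : ℕ) (x : ℝ) :
    Bge n k x = ∑ j ∈ Icc k n, (bernsteinPolynomial ℝ n j).eval x := by
  simp [Bge, bernsteinPolynomial]

theorem Bge_eq_sum_Icc_of_le {n N : ℕ} (hN : n ≤ N) (k : ℕ) (x : ℝ) :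
    Bge n k x = ∑ j ∈ Icc k N, (bernsteinPolynomial ℝ n j).eval x := by
  rw [Bge_eq_sum_eval]
  refine sum_subset (Icc_subset_Icc_right hN) fun j hj hjn => ?_
  rw [bernsteinPolynomial.eq_zero_of_lt ℝ (by simp_all), eval_zero]

theorem Bge_eq_add_Bge_succ (n k : ℕ) (x : ℝ) :
    Bge n k x = (bernsteinPolynomial ℝ n k).eval x + Bge n (k + 1) x := by
  rw [Bge_eq_sum_Icc_of_le (Nat.le_add_right n k), Bge_eq_sum_Icc_of_le (Nat.le_add_right n k),
    ← add_sum_Ioc_eq_sum_Icc (by omega), Icc_add_one_left_eq_Ioc]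

theorem Bge_succ_succ (n k : ℕ) (x : ℝ) :
    Bge (n + 1) (k + 1) x = x * Bge n k x + (1 - x) * Bge n (k + 1) x := by
  rw [Bge_eq_sum_eval, ← map_add_right_Icc, sum_map, Bge_eq_sum_eval, mul_sum,
    Bge_eq_sum_Icc_of_le (Nat.le_succ n), ← map_add_right_Icc, sum_map, mul_sum, ← sum_add_distrib]
  refine sum_congr rfl fun j _ => ?_
  simp [bernsteinPolynomial.succ_succ]

theorem stmt2_general (n k : ℕ) (x : ℝ) :
    (((n : ℝ) + 1 - (k : ℝ)) / ((n : ℝ) + 1)) * Bge (n + 1) k x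
      + ((k : ℝ) / ((n : ℝ) + 1)) * Bge (n + 1) (k + 1) x
      = Bge n k x := by
  have hcoeff := congrArg (eval x) (bernsteinPolynomial.natCast_add_one_sub_mul ℝ n k)
  simp only [eval_mul, eval_sub, eval_add, eval_natCast, eval_one, eval_X] at hcoeff
  have hn : (n : ℝ) + 1 ≠ 0 := by positivity
  field_simp
  linear_combination (↑n + 1 - ↑k) * Bge_eq_add_Bge_succ (n + 1) k x + hcoeff
    + (↑n + 1) * Bge_succ_succ n k x - (↑n + 1) * (1 - x) * Bge_eq_add_Bge_succ n k x

theorem stmt2 (n k : ℕ) (hk : k ≤ n + 1) (x : ℝ) :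
    (((n : ℝ) + 1 - (k : ℝ)) / ((n : ℝ) + 1)) * Bge (n + 1) k x
      + ((k : ℝ) / ((n : ℝ) + 1)) * Bge (n + 1) (k + 1) x
      = Bge n k x :=
  stmt2_general n k x
end

section
/- Let χ be a child distribution with finite m-th moment (m ≥ 1), let h be a threshold function, and let Ψ be the automaton distribution map of (χ,h). For each n ≥ 1 let χ_n be the truncation of χ to n, defined by χ_n(ℓ) = χ(ℓ) for 1 ≤ ℓ ≤ n, χ_n(ℓ) = 0 for ℓ > n, and χ_n(0) = χ(0) + Σ_{ℓ>n} χ(ℓ), and let Ψ_n be the automaton distribution map of (χ_n,h). Then Ψ is m times differentiable on [0,1] (derivatives within [0,1]) and Ψ_n^{(m)} converges uniformly to Ψ^{(m)} on [0,1] as n → ∞. -/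
/-- A child distribution: nonnegative, summable, total mass one. -/
def IsChildDist (χ : ℕ → ℝ) : Prop :=
  (∀ n, 0 ≤ χ n) ∧ Summable χ ∧ (∑' n, χ n) = 1

/-- The automaton distribution map of a recursive tree system `(χ, h)`. -/
noncomputable def Psi (χ : ℕ → ℝ) (h : ℕ → ℕ) (x : ℝ) : ℝ :=
  ∑' n, χ n * Bge n (h n) x

/-- The truncation of `χ` to `n`: it agrees with `χ` on `{1, …, n}`, vanishes above `n`,
and the leftover mass `Σ_{ℓ > n} χ(ℓ)` is shifted onto `0`. -/
noncomputable def trunc (χ : ℕ → ℝ) (n : ℕ) : ℕ → ℝ := fun ℓ =>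
  if ℓ = 0 then χ 0 + ∑' k : ℕ, χ (n + 1 + k)
  else if ℓ ≤ n then χ ℓ else 0

/-!
Write `Ψ = Σ χ(ℓ) Q_ℓ`, where `Q_ℓ = Σ_{j ≥ h(ℓ)} b_{ℓ,j}` is a sum of Bernstein polynomials.
Since `b_{ℓ,j}' = ℓ (b_{ℓ-1,j-1} - b_{ℓ-1,j})` and `0 ≤ b_{ℓ,j} ≤ 1` on `[0,1]`, every derivative
costs at most a factor `2ℓ` there: `|Q_ℓ^{(i)}| ≤ (2ℓ)^i`. A finite `m`-th moment therefore makes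
the differentiated series converge uniformly on `[0,1]` for `i ≤ m`, which gives `Ψ ∈ C^m` with
`Ψ^{(i)} = Σ χ(ℓ) Q_ℓ^{(i)}`, and `|Ψ_n^{(m)} - Ψ^{(m)}| ≤ 2^m Σ |χ_n(ℓ) - χ(ℓ)| ℓ^m → 0`.
-/

open Finset Filter Polynomial Topology

section UniformLimit

variable {E : Type*} [NormedAddCommGroup E] [NormedSpace ℝ E] {ι : Type*} {l : Filter ι}
  {s : Set ℝ} {f f' : ι → ℝ → E} {g g' : ℝ → E}

lemma Convex.norm_sub_sub_le_of_tendsto [l.NeBot] (hs : Convex ℝ s)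
    (hf : ∀ n, ∀ x ∈ s, HasDerivWithinAt (f n) (f' n x) s x)
    (hfg : ∀ x ∈ s, Tendsto (fun n => f n x) l (𝓝 (g x)))
    {N : ι} {C : ℝ} (hC : ∀ᶠ n in l, ∀ z ∈ s, ‖f' n z - f' N z‖ ≤ C)
    {x y : ℝ} (hx : x ∈ s) (hy : y ∈ s) :
    ‖(g y - f N y) - (g x - f N x)‖ ≤ C * ‖y - x‖ := by
  have hlim : Tendsto (fun n => ‖(f n y - f N y) - (f n x - f N x)‖) l
      (𝓝 ‖(g y - f N y) - (g x - f N x)‖) :=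
    (((hfg y hy).sub_const _).sub ((hfg x hx).sub_const _)).norm
  refine le_of_tendsto hlim (hC.mono fun n hn => ?_)
  exact hs.norm_image_sub_le_of_norm_hasDerivWithin_le (f := fun z => f n z - f N z)
    (fun z hz => (hf n z hz).sub (hf N z hz)) hn hx hy

theorem Convex.hasDerivWithinAt_of_tendstoUniformlyOn [l.NeBot] (hs : Convex ℝ s)
    (hf : ∀ n, ∀ x ∈ s, HasDerivWithinAt (f n) (f' n x) s x)
    (hf' : TendstoUniformlyOn f' g' l s)
    (hfg : ∀ x ∈ s, Tendsto (fun n => f n x) l (𝓝 (g x))) {x : ℝ} (hx : x ∈ s) :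
    HasDerivWithinAt g (g' x) s x := by
  rw [hasDerivWithinAt_iff_isLittleO, Asymptotics.isLittleO_iff]
  intro c hc
  have hclose : ∀ᶠ n in l, ∀ z ∈ s, ‖f' n z - g' z‖ ≤ c / 4 :=
    (Metric.tendstoUniformlyOn_iff.1 hf' (c / 4) (by positivity)).mono
      fun n hn z hz => by rw [← dist_eq_norm, dist_comm]; exact (hn z hz).le
  obtain ⟨N, hN⟩ := hclose.exists
  have hC : ∀ᶠ n in l, ∀ z ∈ s, ‖f' n z - f' N z‖ ≤ c / 2 := hclose.mono fun n hn z hz =>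
    calc ‖f' n z - f' N z‖ = ‖(f' n z - g' z) - (f' N z - g' z)‖ := by congr 1; abel
      _ ≤ c / 4 + c / 4 := norm_sub_le_of_le (hn z hz) (hN z hz)
      _ = c / 2 := by ring
  have hfN := hf N x hx
  rw [hasDerivWithinAt_iff_isLittleO, Asymptotics.isLittleO_iff] at hfN
  filter_upwards [hfN (by positivity : 0 < c / 4), self_mem_nhdsWithin] with y hfy hy
  calc ‖g y - g x - (y - x) • g' x‖
      = ‖((g y - f N y) - (g x - f N x)) + (f N y - f N x - (y - x) • f' N x)
          + (y - x) • (f' N x - g' x)‖ := by congr 1; rw [smul_sub]; abel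
    _ ≤ c / 2 * ‖y - x‖ + c / 4 * ‖y - x‖ + ‖y - x‖ * (c / 4) := by
        refine norm_add₃_le.trans
          (add_le_add_three (hs.norm_sub_sub_le_of_tendsto hf hfg hC hx hy) hfy ?_)
        rw [norm_smul]
        exact mul_le_mul_of_nonneg_left (hN x hx) (norm_nonneg _)
    _ = c * ‖y - x‖ := by ring

end UniformLimit

section DerivativeChain

variable {E : Type*} [NormedAddCommGroup E] [NormedSpace ℝ E] {s : Set ℝ} {G : ℕ → ℝ → E}
  {m : ℕ}

lemma iteratedDerivWithin_eqOn_of_hasDerivWithinAt (hs : UniqueDiffOn ℝ s)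
    (hG : ∀ i < m, ∀ x ∈ s, HasDerivWithinAt (G i) (G (i + 1) x) s x) :
    ∀ i ≤ m, Set.EqOn (iteratedDerivWithin i (G 0) s) (G i) s
  | 0, _ => by rw [iteratedDerivWithin_zero]; exact Set.eqOn_refl _ _
  | i + 1, hi => fun x hx => by
    have ih := iteratedDerivWithin_eqOn_of_hasDerivWithinAt hs hG i (by omega)
    rw [iteratedDerivWithin_succ, derivWithin_congr ih (ih hx)]
    exact (hG i hi x hx).derivWithin (hs x hx)

lemma contDiffOn_of_hasDerivWithinAt (hs : UniqueDiffOn ℝ s)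
    (hG : ∀ i < m, ∀ x ∈ s, HasDerivWithinAt (G i) (G (i + 1) x) s x)
    (hGm : ContinuousOn (G m) s) : ContDiffOn ℝ m (G 0) s := by
  have heq := iteratedDerivWithin_eqOn_of_hasDerivWithinAt hs hG
  refine contDiffOn_of_continuousOn_differentiableOn_deriv (fun i hi => ?_) (fun i hi => ?_)
  · have hi : i ≤ m := by exact_mod_cast hi
    refine ContinuousOn.congr ?_ (heq i hi)
    rcases hi.lt_or_eq with hi | rfl
    · exact fun x hx => (hG i hi x hx).continuousWithinAt
    · exact hGm
  · have hi : i < m := by exact_mod_cast hi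
    exact fun x hx => (hG i hi x hx).differentiableWithinAt.congr (heq i hi.le) (heq i hi.le hx)

end DerivativeChain

section Series

variable {E : Type*} [NormedAddCommGroup E] [NormedSpace ℝ E] [CompleteSpace E] {s : Set ℝ}
  {F : ℕ → ℕ → ℝ → E} {u : ℕ → ℕ → ℝ} {m : ℕ}

theorem Convex.hasDerivWithinAt_tsum (hs : Convex ℝ s)
    (hF : ∀ i < m, ∀ ℓ, ∀ x ∈ s, HasDerivWithinAt (F i ℓ) (F (i + 1) ℓ x) s x)
    (hu : ∀ i ≤ m, Summable (u i)) (hFu : ∀ i ≤ m, ∀ ℓ, ∀ x ∈ s, ‖F i ℓ x‖ ≤ u i ℓ)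
    {i : ℕ} (hi : i < m) {x : ℝ} (hx : x ∈ s) :
    HasDerivWithinAt (fun y => ∑' ℓ, F i ℓ y) (∑' ℓ, F (i + 1) ℓ x) s x :=
  hs.hasDerivWithinAt_of_tendstoUniformlyOn (f := fun n y => ∑ ℓ ∈ range n, F i ℓ y)
    (fun _ y hy => HasDerivWithinAt.fun_sum fun ℓ _ => hF i hi ℓ y hy)
    (tendstoUniformlyOn_tsum_nat (hu (i + 1) hi) fun ℓ => hFu (i + 1) hi ℓ)
    (fun y hy => ((hu i hi.le).of_norm_bounded fun ℓ => hFu i hi.le ℓ y hy).hasSum.tendsto_sum_nat)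
    hx

theorem Convex.contDiffOn_tsum (hs : Convex ℝ s) (hs' : UniqueDiffOn ℝ s)
    (hF : ∀ i < m, ∀ ℓ, ∀ x ∈ s, HasDerivWithinAt (F i ℓ) (F (i + 1) ℓ x) s x)
    (hFm : ∀ ℓ, ContinuousOn (F m ℓ) s)
    (hu : ∀ i ≤ m, Summable (u i)) (hFu : ∀ i ≤ m, ∀ ℓ, ∀ x ∈ s, ‖F i ℓ x‖ ≤ u i ℓ) :
    ContDiffOn ℝ m (fun x => ∑' ℓ, F 0 ℓ x) s :=
  contDiffOn_of_hasDerivWithinAt (G := fun i x => ∑' ℓ, F i ℓ x) hs'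
    (fun _ hi _ hx => hs.hasDerivWithinAt_tsum hF hu hFu hi hx)
    ((tendstoUniformlyOn_tsum_nat (hu m le_rfl) fun ℓ => hFu m le_rfl ℓ).continuousOn
      (Frequently.of_forall fun _ => continuousOn_finsetSum _ fun ℓ _ => hFm ℓ))

theorem Convex.iteratedDerivWithin_tsum (hs : Convex ℝ s) (hs' : UniqueDiffOn ℝ s)
    (hF : ∀ i < m, ∀ ℓ, ∀ x ∈ s, HasDerivWithinAt (F i ℓ) (F (i + 1) ℓ x) s x)
    (hu : ∀ i ≤ m, Summable (u i)) (hFu : ∀ i ≤ m, ∀ ℓ, ∀ x ∈ s, ‖F i ℓ x‖ ≤ u i ℓ)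
    {i : ℕ} (hi : i ≤ m) {x : ℝ} (hx : x ∈ s) :
    iteratedDerivWithin i (fun x => ∑' ℓ, F 0 ℓ x) s x = ∑' ℓ, F i ℓ x :=
  iteratedDerivWithin_eqOn_of_hasDerivWithinAt (G := fun i x => ∑' ℓ, F i ℓ x) hs'
    (fun _ hj _ hy => hs.hasDerivWithinAt_tsum hF hu hFu hj hy) i hi hx

end Series

section Bernstein

noncomputable def bernsteinTail (n k : ℕ) : ℝ[X] :=
  ∑ j ∈ Icc k n, bernsteinPolynomial ℝ n j

lemma Bge_eq_eval_bernsteinTail (n k : ℕ) (x : ℝ) : Bge n k x = (bernsteinTail n k).eval x := by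
  simp [Bge, bernsteinTail, bernsteinPolynomial, eval_finsetSum]

variable {x : ℝ}

lemma bernsteinPolynomial_eval_nonneg (n ν : ℕ) (hx : x ∈ Set.Icc (0 : ℝ) 1) :
    0 ≤ (bernsteinPolynomial ℝ n ν).eval x := by
  obtain ⟨hx0, hx1⟩ := hx
  have : 0 ≤ 1 - x := sub_nonneg.2 hx1
  simp only [bernsteinPolynomial, eval_mul, eval_pow, eval_natCast, eval_X, eval_sub, eval_one]
  positivity

lemma sum_bernsteinPolynomial_eval_le_one {n : ℕ} {t : Finset ℕ} (ht : t ⊆ range (n + 1))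
    (hx : x ∈ Set.Icc (0 : ℝ) 1) : ∑ j ∈ t, (bernsteinPolynomial ℝ n j).eval x ≤ 1 :=
  calc ∑ j ∈ t, (bernsteinPolynomial ℝ n j).eval x
      ≤ ∑ j ∈ range (n + 1), (bernsteinPolynomial ℝ n j).eval x :=
        sum_le_sum_of_subset_of_nonneg ht fun j _ _ => bernsteinPolynomial_eval_nonneg n j hx
    _ = 1 := by rw [← eval_finsetSum, bernsteinPolynomial.sum, eval_one]

lemma abs_bernsteinPolynomial_eval_le_one (n ν : ℕ) (hx : x ∈ Set.Icc (0 : ℝ) 1) :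
    |(bernsteinPolynomial ℝ n ν).eval x| ≤ 1 := by
  rcases le_or_gt ν n with hν | hν
  · rw [abs_of_nonneg (bernsteinPolynomial_eval_nonneg n ν hx)]
    simpa using sum_bernsteinPolynomial_eval_le_one (t := {ν})
      (by simpa [Nat.lt_succ_iff] using hν) hx
  · simp [bernsteinPolynomial.eq_zero_of_lt ℝ hν]

lemma abs_eval_iterate_derivative_bernsteinPolynomial_le (i n ν : ℕ)
    (hx : x ∈ Set.Icc (0 : ℝ) 1) :
    |(derivative^[i] (bernsteinPolynomial ℝ n ν)).eval x| ≤ (2 * n) ^ i := by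
  induction i generalizing n ν with
  | zero => simpa using abs_bernsteinPolynomial_eval_le_one n ν hx
  | succ i ih =>
    have step : ∀ a : ℝ, |a| ≤ 2 * (2 * ((n - 1 : ℕ) : ℝ)) ^ i → |n * a| ≤ (2 * n) ^ (i + 1) := by
      intro a ha
      have hn : ((n - 1 : ℕ) : ℝ) ≤ n := by exact_mod_cast n.sub_le 1
      calc |n * a| = n * |a| := by rw [abs_mul, Nat.abs_cast]
        _ ≤ n * (2 * (2 * n) ^ i) := by gcongr; exact ha.trans (by gcongr)
        _ = (2 * n) ^ (i + 1) := by ring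
    rw [Function.iterate_succ_apply]
    cases ν with
    | zero =>
      rw [bernsteinPolynomial.derivative_zero, neg_mul, iterate_derivative_neg,
        iterate_derivative_natCast_mul, eval_neg, eval_mul, eval_natCast, abs_neg]
      refine step _ ((ih _ _).trans ?_)
      linarith [pow_nonneg (by positivity : (0 : ℝ) ≤ 2 * ((n - 1 : ℕ) : ℝ)) i]
    | succ ν =>
      rw [bernsteinPolynomial.derivative_succ, iterate_derivative_natCast_mul,
        iterate_derivative_sub, eval_mul, eval_natCast, eval_sub]
      exact step _ ((abs_sub _ _).trans (by linarith [ih (n - 1) ν, ih (n - 1) (ν + 1)]))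

lemma bernsteinTail_zero (n : ℕ) : bernsteinTail n 0 = 1 := by
  rw [bernsteinTail, ← bernsteinPolynomial.sum ℝ n, range_eq_Ico]
  rfl

lemma derivative_bernsteinTail_succ (n k : ℕ) :
    derivative (bernsteinTail n (k + 1)) = n * bernsteinPolynomial ℝ (n - 1) k := by
  rcases Nat.eq_zero_or_pos n with rfl | hn
  · simp [bernsteinTail]
  rcases le_or_gt k n with hk | hk
  · calc derivative (bernsteinTail n (k + 1))
        = ∑ j ∈ Ico k n, derivative (bernsteinPolynomial ℝ n (j + 1)) := by
          rw [bernsteinTail, map_sum,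
            sum_Ico_add' (fun j => derivative (bernsteinPolynomial ℝ n j))]
          rfl
      _ = n * ∑ j ∈ Ico k n, (bernsteinPolynomial ℝ (n - 1) j
            - bernsteinPolynomial ℝ (n - 1) (j + 1)) := by
          simp only [bernsteinPolynomial.derivative_succ, mul_sum]
      _ = n * bernsteinPolynomial ℝ (n - 1) k := by
          have := sum_Ico_sub (fun j => -bernsteinPolynomial ℝ (n - 1) j) hk
          simp only [sub_neg_eq_add, neg_add_eq_sub] at this
          rw [this, bernsteinPolynomial.eq_zero_of_lt ℝ (by omega : n - 1 < n), sub_zero]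
  · rw [bernsteinTail, Icc_eq_empty (by omega), sum_empty, derivative_zero,
      bernsteinPolynomial.eq_zero_of_lt ℝ (by omega : n - 1 < k), mul_zero]

lemma abs_eval_iterate_derivative_bernsteinTail_le (i n k : ℕ) (hx : x ∈ Set.Icc (0 : ℝ) 1) :
    |(derivative^[i] (bernsteinTail n k)).eval x| ≤ (2 * n) ^ i := by
  rcases i with _ | i
  · rw [Function.iterate_zero_apply, pow_zero, bernsteinTail, eval_finsetSum,
      abs_of_nonneg (sum_nonneg fun j _ => bernsteinPolynomial_eval_nonneg n j hx)]
    exact sum_bernsteinPolynomial_eval_le_one (fun j hj => by simp at hj ⊢; omega) hx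
  rcases k with _ | k
  · rw [bernsteinTail_zero, iterate_derivative_one i.succ_pos, eval_zero, abs_zero]
    positivity
  rw [Function.iterate_succ_apply, derivative_bernsteinTail_succ,
    iterate_derivative_natCast_mul, eval_mul, eval_natCast, abs_mul, Nat.abs_cast]
  have hn : ((n - 1 : ℕ) : ℝ) ≤ n := by exact_mod_cast n.sub_le 1
  calc n * |(derivative^[i] (bernsteinPolynomial ℝ (n - 1) k)).eval x|
      ≤ n * (2 * n) ^ i := by
        gcongr
        exact (abs_eval_iterate_derivative_bernsteinPolynomial_le i _ _ hx).trans (by gcongr)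
    _ ≤ 2 * n * (2 * n) ^ i := by gcongr; linarith [(Nat.cast_nonneg n : (0 : ℝ) ≤ n)]
    _ = (2 * n) ^ (i + 1) := by ring

end Bernstein

lemma summable_mul_pow_of_le {c : ℕ → ℝ} {i m : ℕ} (hc : Summable c)
    (hcm : Summable fun ℓ : ℕ => c ℓ * (ℓ : ℝ) ^ m) (hi : i ≤ m) :
    Summable fun ℓ : ℕ => c ℓ * (ℓ : ℝ) ^ i := by
  refine (hc.abs.add hcm.abs).of_norm_bounded fun ℓ => ?_
  have hpow : (ℓ : ℝ) ^ i ≤ 1 + (ℓ : ℝ) ^ m := by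
    rcases Nat.eq_zero_or_pos ℓ with rfl | hℓ
    · rcases Nat.eq_zero_or_pos i with rfl | hi0
      · simp
      · rw [Nat.cast_zero, zero_pow hi0.ne']; positivity
    · have : (ℓ : ℝ) ^ i ≤ (ℓ : ℝ) ^ m := pow_le_pow_right₀ (by exact_mod_cast hℓ) hi
      linarith
  rw [Real.norm_eq_abs, abs_mul, abs_mul, abs_of_nonneg (by positivity : (0 : ℝ) ≤ (ℓ : ℝ) ^ i),
    abs_of_nonneg (by positivity : (0 : ℝ) ≤ (ℓ : ℝ) ^ m)]
  nlinarith [abs_nonneg (c ℓ)]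

section Psi

variable {c d : ℕ → ℝ} {m : ℕ}

lemma Psi_eq_tsum_eval (c : ℕ → ℝ) (h : ℕ → ℕ) :
    Psi c h = fun x => ∑' ℓ, c ℓ * (bernsteinTail ℓ (h ℓ)).eval x := by
  funext x
  simp only [Psi, Bge_eq_eval_bernsteinTail]

lemma abs_mul_eval_iterate_derivative_bernsteinTail_le (a : ℝ) (i ℓ k : ℕ) {x : ℝ}
    (hx : x ∈ Set.Icc (0 : ℝ) 1) :
    |a * (derivative^[i] (bernsteinTail ℓ k)).eval x| ≤ 2 ^ i * |a * (ℓ : ℝ) ^ i| := by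
  rw [abs_mul, abs_mul, abs_of_nonneg (by positivity : (0 : ℝ) ≤ (ℓ : ℝ) ^ i)]
  calc |a| * |(derivative^[i] (bernsteinTail ℓ k)).eval x| ≤ |a| * (2 * ℓ) ^ i := by
        gcongr; exact abs_eval_iterate_derivative_bernsteinTail_le i ℓ k hx
    _ = 2 ^ i * (|a| * (ℓ : ℝ) ^ i) := by ring

lemma hasDerivAt_mul_eval_iterate_derivative (a : ℝ) (p : ℝ[X]) (i : ℕ) (x : ℝ) :
    HasDerivAt (fun y => a * (derivative^[i] p).eval y) (a * (derivative^[i + 1] p).eval x) x := by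
  rw [Function.iterate_succ_apply']
  exact ((derivative^[i] p).hasDerivAt x).const_mul a

theorem contDiffOn_Psi (h : ℕ → ℕ) (hc : ∀ i ≤ m, Summable fun ℓ : ℕ => c ℓ * (ℓ : ℝ) ^ i) :
    ContDiffOn ℝ m (Psi c h) (Set.Icc 0 1) := by
  rw [Psi_eq_tsum_eval]
  exact (convex_Icc 0 1).contDiffOn_tsum (uniqueDiffOn_Icc one_pos)
    (F := fun i ℓ x => c ℓ * (derivative^[i] (bernsteinTail ℓ (h ℓ))).eval x)
    (fun i _ ℓ x _ => (hasDerivAt_mul_eval_iterate_derivative _ _ i x).hasDerivWithinAt)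
    (fun ℓ => (continuous_const.mul (Polynomial.continuous _)).continuousOn)
    (fun i hi => ((hc i hi).abs.mul_left (2 ^ i)))
    (fun i _ ℓ x hx => abs_mul_eval_iterate_derivative_bernsteinTail_le _ i ℓ _ hx)

theorem iteratedDerivWithin_Psi (h : ℕ → ℕ) (hc : ∀ i ≤ m, Summable fun ℓ : ℕ => c ℓ * (ℓ : ℝ) ^ i)
    {x : ℝ} (hx : x ∈ Set.Icc (0 : ℝ) 1) :
    iteratedDerivWithin m (Psi c h) (Set.Icc 0 1) x
      = ∑' ℓ, c ℓ * (derivative^[m] (bernsteinTail ℓ (h ℓ))).eval x := by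
  rw [Psi_eq_tsum_eval]
  exact (convex_Icc 0 1).iteratedDerivWithin_tsum (uniqueDiffOn_Icc one_pos)
    (F := fun i ℓ x => c ℓ * (derivative^[i] (bernsteinTail ℓ (h ℓ))).eval x)
    (fun i _ ℓ x _ => (hasDerivAt_mul_eval_iterate_derivative _ _ i x).hasDerivWithinAt)
    (fun i hi => ((hc i hi).abs.mul_left (2 ^ i)))
    (fun i _ ℓ x hx => abs_mul_eval_iterate_derivative_bernsteinTail_le _ i ℓ _ hx) le_rfl hx

theorem abs_iteratedDerivWithin_Psi_sub_le (h : ℕ → ℕ)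
    (hc : ∀ i ≤ m, Summable fun ℓ : ℕ => c ℓ * (ℓ : ℝ) ^ i)
    (hd : ∀ i ≤ m, Summable fun ℓ : ℕ => d ℓ * (ℓ : ℝ) ^ i) {x : ℝ} (hx : x ∈ Set.Icc (0 : ℝ) 1) :
    |iteratedDerivWithin m (Psi c h) (Set.Icc 0 1) x
        - iteratedDerivWithin m (Psi d h) (Set.Icc 0 1) x|
      ≤ 2 ^ m * ∑' ℓ, |c ℓ - d ℓ| * (ℓ : ℝ) ^ m := by
  have hsum : ∀ e : ℕ → ℝ, (∀ i ≤ m, Summable fun ℓ : ℕ => e ℓ * (ℓ : ℝ) ^ i) →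
      Summable fun ℓ => e ℓ * (derivative^[m] (bernsteinTail ℓ (h ℓ))).eval x := fun e he =>
    ((he m le_rfl).abs.mul_left (2 ^ m)).of_norm_bounded
      fun ℓ => abs_mul_eval_iterate_derivative_bernsteinTail_le _ m ℓ _ hx
  have hdiff : Summable fun ℓ : ℕ => |(c ℓ - d ℓ) * (ℓ : ℝ) ^ m| := by
    simpa only [sub_mul] using ((hc m le_rfl).sub (hd m le_rfl)).abs
  have hbound := fun ℓ => abs_mul_eval_iterate_derivative_bernsteinTail_le (c ℓ - d ℓ) m ℓ (h ℓ) hx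
  rw [iteratedDerivWithin_Psi h hc hx, iteratedDerivWithin_Psi h hd hx,
    ← (hsum c hc).tsum_sub (hsum d hd)]
  simp only [← sub_mul]
  have habs := (hdiff.mul_left (2 ^ m)).of_nonneg_of_le (fun _ => abs_nonneg _) hbound
  calc |∑' ℓ, (c ℓ - d ℓ) * (derivative^[m] (bernsteinTail ℓ (h ℓ))).eval x|
      ≤ ∑' ℓ, |(c ℓ - d ℓ) * (derivative^[m] (bernsteinTail ℓ (h ℓ))).eval x| :=
        norm_tsum_le_tsum_norm (f := fun ℓ => (c ℓ - d ℓ) *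
          (derivative^[m] (bernsteinTail ℓ (h ℓ))).eval x) habs
    _ ≤ ∑' ℓ, 2 ^ m * |(c ℓ - d ℓ) * (ℓ : ℝ) ^ m| :=
        habs.tsum_le_tsum hbound (hdiff.mul_left _)
    _ = 2 ^ m * ∑' ℓ, |c ℓ - d ℓ| * (ℓ : ℝ) ^ m := by
        rw [tsum_mul_left]
        congr 1
        exact tsum_congr fun ℓ => by
          rw [abs_mul, abs_of_nonneg (by positivity : (0 : ℝ) ≤ (ℓ : ℝ) ^ m)]

end Psi

section Truncation

variable {χ : ℕ → ℝ} {n ℓ : ℕ}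

lemma trunc_apply_of_lt (hℓ : n < ℓ) : trunc χ n ℓ = 0 := by
  simp [trunc, show ℓ ≠ 0 by omega, show ¬ℓ ≤ n by omega]

lemma trunc_apply_of_ne_zero_of_le (hℓ : ℓ ≠ 0) (hℓn : ℓ ≤ n) : trunc χ n ℓ = χ ℓ := by
  simp [trunc, hℓ, hℓn]

lemma summable_trunc_mul (χ : ℕ → ℝ) (n : ℕ) (f : ℕ → ℝ) :
    Summable fun ℓ => trunc χ n ℓ * f ℓ :=
  summable_of_ne_finset_zero (s := range (n + 1)) fun ℓ hℓ => by
    rw [trunc_apply_of_lt (by simpa [Nat.lt_succ_iff] using hℓ), zero_mul]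

/-- For `m ≥ 1` the weight `ℓ ^ m` vanishes at `ℓ = 0`, so the mass shifted onto `0` is not seen. -/
lemma tendsto_tsum_abs_trunc_sub_mul_pow {m : ℕ} (hm : 1 ≤ m)
    (hχm : Summable fun ℓ : ℕ => χ ℓ * (ℓ : ℝ) ^ m) :
    Tendsto (fun n => ∑' ℓ, |trunc χ n ℓ - χ ℓ| * (ℓ : ℝ) ^ m) atTop (𝓝 0) := by
  have hm0 : m ≠ 0 := by omega
  have hterm : ∀ ℓ, Tendsto (fun n => |trunc χ n ℓ - χ ℓ| * (ℓ : ℝ) ^ m) atTop (𝓝 0) := by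
    intro ℓ
    rcases Nat.eq_zero_or_pos ℓ with rfl | hℓ
    · simp [zero_pow hm0]
    · exact tendsto_const_nhds.congr'
        ((eventually_ge_atTop ℓ).mono fun n hn => by simp [trunc_apply_of_ne_zero_of_le hℓ.ne' hn])
  have hdom : ∀ n ℓ, ‖|trunc χ n ℓ - χ ℓ| * (ℓ : ℝ) ^ m‖ ≤ |χ ℓ * (ℓ : ℝ) ^ m| := by
    intro n ℓ
    rcases Nat.eq_zero_or_pos ℓ with rfl | hℓ
    · simp [zero_pow hm0]
    rcases le_or_gt ℓ n with hn | hn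
    · simp only [trunc_apply_of_ne_zero_of_le hℓ.ne' hn, sub_self, abs_zero, zero_mul, norm_zero]
      positivity
    · simp [trunc_apply_of_lt hn, abs_mul]
  simpa using tendsto_tsum_of_dominated_convergence hχm.abs hterm (Eventually.of_forall hdom)

end Truncation

theorem stmt6_general (m : ℕ) (hm : 1 ≤ m) (χ : ℕ → ℝ) (h : ℕ → ℕ)
    (hχ : IsChildDist χ)
    (hmom : Summable fun n => χ n * (n : ℝ) ^ m) :
    ContDiffOn ℝ (m : ℕ∞) (Psi χ h) (Set.Icc (0 : ℝ) 1) ∧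
    TendstoUniformlyOn
      (fun n x => iteratedDerivWithin m (Psi (trunc χ n) h) (Set.Icc (0 : ℝ) 1) x)
      (fun x => iteratedDerivWithin m (Psi χ h) (Set.Icc (0 : ℝ) 1) x)
      Filter.atTop (Set.Icc (0 : ℝ) 1) := by
  have hχm : ∀ i ≤ m, Summable fun ℓ : ℕ => χ ℓ * (ℓ : ℝ) ^ i :=
    fun i hi => summable_mul_pow_of_le hχ.2.1 hmom hi
  refine ⟨contDiffOn_Psi h hχm, Metric.tendstoUniformlyOn_iff.2 fun ε hε => ?_⟩
  have hlim := (tendsto_tsum_abs_trunc_sub_mul_pow hm hmom).const_mul (2 ^ m)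
  rw [mul_zero] at hlim
  filter_upwards [hlim.eventually (gt_mem_nhds hε)] with n hn x hx
  rw [dist_comm, Real.dist_eq]
  exact (abs_iteratedDerivWithin_Psi_sub_le h (fun i _ => summable_trunc_mul χ n _) hχm hx).trans_lt
    hn

theorem stmt6 (m : ℕ) (hm : 1 ≤ m) (χ : ℕ → ℝ) (h : ℕ → ℕ)
    (hχ : IsChildDist χ)
    (hmom : Summable fun n => χ n * (n : ℝ) ^ m)
    (hh : ∀ n, 1 ≤ h n) :
    ContDiffOn ℝ (m : ℕ∞) (Psi χ h) (Set.Icc (0 : ℝ) 1) ∧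
    TendstoUniformlyOn
      (fun n x => iteratedDerivWithin m (Psi (trunc χ n) h) (Set.Icc (0 : ℝ) 1) x)
      (fun x => iteratedDerivWithin m (Psi χ h) (Set.Icc (0 : ℝ) 1) x)
      Filter.atTop (Set.Icc (0 : ℝ) 1) :=
  stmt6_general m hm χ h hχ hmom
end

section
/- Let χ be the child distribution with χ(0) = χ(1) = 0 and χ(ℓ) = 1/(ℓ(ℓ−1)) for ℓ ≥ 2, and let h(ℓ) = 2 for all ℓ. Then the automaton distribution map of (χ,h) is the identity on [0,1]: for every x ∈ [0,1], Σ_{ℓ=2}^{∞} (1/(ℓ(ℓ−1))) · P[Bin(ℓ,x) ≥ 2] = x. -/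
/-!
Since `P[Bin(n,x) ≥ 1] = 1 - (1-x)^n` and `P[Bin(n,x) ≥ 2] = 1 - (1-x)^n - n x (1-x)^(n-1)`,
the `n`-th term telescopes:
`P[Bin(n,x) ≥ 2] / (n(n-1)) = P[Bin(n-1,x) ≥ 1] / (n-1) - P[Bin(n,x) ≥ 1] / n`.
Summing from `n = 2` leaves `P[Bin(1,x) ≥ 1] = x`, because `P[Bin(n,x) ≥ 1] / n → 0`.
For `x ∈ [0,1]` the terms are nonnegative, so convergence of the partial sums gives the sum.
-/

open Finset Filter Topology

lemma Bge_zero (n : ℕ) (x : ℝ) : Bge n 0 x = 1 := by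
  have h := (add_pow x (1 - x) n).symm
  rw [add_sub_cancel, one_pow, range_eq_Ico, Ico_add_one_right_eq_Icc] at h
  exact (sum_congr rfl fun _ _ => by ring).trans h

lemma Bge_succ (n k : ℕ) (x : ℝ) :
    Bge n (k + 1) x = Bge n k x - n.choose k * x ^ k * (1 - x) ^ (n - k) := by
  rcases le_or_gt k n with hk | hk
  · rw [Bge, Bge, Icc_eq_cons_Ioc hk, sum_cons, Icc_add_one_left_eq_Ioc]
    ring
  · simp [Bge, Icc_eq_empty_of_lt hk, Icc_eq_empty_of_lt (hk.trans k.lt_succ_self),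
      Nat.choose_eq_zero_of_lt hk]

lemma Bge_one (n : ℕ) (x : ℝ) : Bge n 1 x = 1 - (1 - x) ^ n := by
  simp [Bge_succ n 0, Bge_zero]

lemma Bge_two (n : ℕ) (x : ℝ) :
    Bge n 2 x = 1 - (1 - x) ^ n - n * x * (1 - x) ^ (n - 1) := by
  simp [Bge_succ n 1, Bge_one]

lemma choose_mul_pow_mul_pow_nonneg (n j : ℕ) {x : ℝ} (hx : x ∈ Set.Icc (0 : ℝ) 1) :
    0 ≤ (n.choose j : ℝ) * x ^ j * (1 - x) ^ (n - j) :=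
  mul_nonneg (mul_nonneg (Nat.cast_nonneg _) (pow_nonneg hx.1 _))
    (pow_nonneg (sub_nonneg.2 hx.2) _)

lemma Bge_nonneg (n k : ℕ) {x : ℝ} (hx : x ∈ Set.Icc (0 : ℝ) 1) : 0 ≤ Bge n k x :=
  sum_nonneg fun j _ => choose_mul_pow_mul_pow_nonneg n j hx

lemma Bge_le_one (n k : ℕ) {x : ℝ} (hx : x ∈ Set.Icc (0 : ℝ) 1) : Bge n k x ≤ 1 := by
  rw [← Bge_zero n x]
  exact sum_le_sum_of_subset_of_nonneg (Icc_subset_Icc_left k.zero_le)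
    fun j _ _ => choose_mul_pow_mul_pow_nonneg n j hx

lemma tendsto_Bge_div_atTop (k : ℕ) {x : ℝ} (hx : x ∈ Set.Icc (0 : ℝ) 1) :
    Tendsto (fun n : ℕ => Bge n k x / n) atTop (𝓝 0) :=
  squeeze_zero (fun n => div_nonneg (Bge_nonneg n k hx) n.cast_nonneg)
    (fun n => div_le_div_of_nonneg_right (Bge_le_one n k hx) n.cast_nonneg)
    tendsto_one_div_atTop_nhds_zero_nat

lemma hasSum_of_nonneg_of_eq_sub {f u : ℕ → ℝ} {l : ℝ} (hf : ∀ n, 0 ≤ f n)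
    (hfu : ∀ n, f n = u n - u (n + 1)) (hu : Tendsto u atTop (𝓝 l)) :
    HasSum f (u 0 - l) := by
  rw [hasSum_iff_tendsto_nat_of_nonneg hf]
  simp_rw [hfu, sum_range_sub']
  exact tendsto_const_nhds.sub hu

lemma one_div_mul_Bge_two_eq_sub (m : ℕ) (x : ℝ) :
    1 / (((m + 2 : ℕ) : ℝ) * ((m + 2 : ℕ) - 1)) * Bge (m + 2) 2 x
      = Bge (m + 1) 1 x / (m + 1 : ℕ) - Bge (m + 2) 1 x / (m + 2 : ℕ) := by
  rw [Bge_two, Bge_one, Bge_one]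
  push_cast
  rw [add_sub_assoc, show (2 : ℝ) - 1 = 1 by norm_num]
  field_simp
  ring

theorem stmt8 (x : ℝ) (hx : x ∈ Set.Icc (0 : ℝ) 1) :
    ∑' n : ℕ, (if 2 ≤ n then 1 / ((n : ℝ) * ((n : ℝ) - 1)) else 0) * Bge n 2 x = x := by
  set f : ℕ → ℝ := fun n => (if 2 ≤ n then 1 / ((n : ℝ) * ((n : ℝ) - 1)) else 0) * Bge n 2 x
  have hf (m : ℕ) : f (m + 2) = 1 / (((m + 2 : ℕ) : ℝ) * ((m + 2 : ℕ) - 1)) * Bge (m + 2) 2 x := by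
    simp only [f, if_pos (Nat.le_add_left 2 m)]
  have hf_nonneg (m : ℕ) : 0 ≤ f (m + 2) := by
    have : (1 : ℝ) ≤ (m + 2 : ℕ) := Nat.one_le_cast.2 (by omega)
    rw [hf]
    exact mul_nonneg (by positivity) (Bge_nonneg _ _ hx)
  have hu : Tendsto (fun m : ℕ => Bge (m + 1) 1 x / (m + 1 : ℕ)) atTop (𝓝 0) :=
    (tendsto_add_atTop_iff_nat 1).2 (tendsto_Bge_div_atTop 1 hx)
  have htail : HasSum (fun m => f (m + 2)) x := by
    simpa [Bge_one] using hasSum_of_nonneg_of_eq_sub hf_nonneg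
      (fun m => (hf m).trans (one_div_mul_Bge_two_eq_sub m x)) hu
  have hhead : ∑ n ∈ range 2, f n = 0 := by simp [f, sum_range_succ]
  exact ((hasSum_nat_add_iff' 2).1 (by rwa [hhead, sub_zero])).tsum_eq
end

section
/- Let p, r, j, k be integers with 1 ≤ j ≤ p and 1 ≤ k ≤ r. If either (p < r and j ≥ k) or (p ≤ r and j > k), then the function x ↦ B≥_{p,j}(x) / B≥_{r,k}(x) is strictly increasing on the interval (0,1]. (Note that B≥_{r,k}(x) > 0 for x ∈ (0,1] since k ≤ r.) -/
open Finset

theorem Nat.choose_mul_choose_add_le {m n d a b : ℕ} (hmn : m ≤ n + d) (hab : a ≤ b) :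
    n.choose a * m.choose (b + d) ≤ m.choose (a + d) * n.choose b := by
  induction b, hab using Nat.le_induction with
  | base => exact (mul_comm _ _).le
  | succ b _ ih =>
    refine Nat.le_of_mul_le_mul_right ?_ (Nat.succ_pos (b + d))
    calc n.choose a * m.choose (b + 1 + d) * (b + d + 1)
        = n.choose a * m.choose (b + d) * (m - (b + d)) := by
          rw [Nat.add_right_comm, mul_assoc, Nat.choose_succ_right_eq, mul_assoc]
      _ ≤ m.choose (a + d) * n.choose b * (n - b) := Nat.mul_le_mul ih (by omega)
      _ = m.choose (a + d) * n.choose (b + 1) * (b + 1) := by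
          rw [mul_assoc, ← Nat.choose_succ_right_eq, mul_assoc]
      _ ≤ m.choose (a + d) * n.choose (b + 1) * (b + d + 1) := Nat.mul_le_mul_left _ (by omega)

theorem hasDerivAt_choose_mul_pow_mul_one_sub_pow (n i : ℕ) (x : ℝ) :
    HasDerivAt (fun y : ℝ => n.choose i * y ^ i * (1 - y) ^ (n - i))
      (i * n.choose i * x ^ (i - 1) * (1 - x) ^ (n - i)
        - (i + 1 : ℕ) * n.choose (i + 1) * x ^ (i + 1 - 1) * (1 - x) ^ (n - (i + 1))) x := by
  have hpow := ((hasDerivAt_pow i x).const_mul (n.choose i : ℝ)).mul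
    ((hasDerivAt_pow (n - i) (1 - x)).comp x ((hasDerivAt_id x).const_sub 1))
  refine hpow.congr_deriv ?_
  have hchoose := congrArg (Nat.cast : ℕ → ℝ) (Nat.choose_succ_right_eq n i)
  push_cast at hchoose
  rw [Nat.add_sub_cancel, show n - (i + 1) = n - i - 1 by omega]
  push_cast [Function.comp_apply]
  linear_combination x ^ i * (1 - x) ^ (n - i - 1) * hchoose

theorem Bge_hasDerivAt (n k : ℕ) (x : ℝ) :
    HasDerivAt (Bge n k) (k * n.choose k * x ^ (k - 1) * (1 - x) ^ (n - k)) x := by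
  set u : ℕ → ℝ := fun i => i * n.choose i * x ^ (i - 1) * (1 - x) ^ (n - i)
  have htelescope : ∑ i ∈ Icc k n, (u i - u (i + 1)) = u k := by
    rcases le_or_gt k n with hkn | hnk
    · have hu : u (n + 1) = 0 := by simp [u]
      have := sum_Icc_sub (f := u) hkn
      rw [sum_sub_distrib] at this ⊢
      linarith
    · simp [Icc_eq_empty_of_lt hnk, u, Nat.choose_eq_zero_of_lt hnk]
  show HasDerivAt _ (u k) x
  rw [← htelescope]
  exact HasDerivAt.fun_sum fun i _ => hasDerivAt_choose_mul_pow_mul_one_sub_pow n i x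

theorem Bge_continuous (n k : ℕ) : Continuous (Bge n k) :=
  continuous_iff_continuousAt.2 fun x => (Bge_hasDerivAt n k x).continuousAt

theorem Bge_pos {n k : ℕ} (hkn : k ≤ n) {x : ℝ} (hx : 0 < x) (hx1 : x ≤ 1) : 0 < Bge n k x := by
  have h1x : 0 ≤ 1 - x := by linarith
  refine sum_pos' (fun i _ => by positivity) ⟨n, mem_Icc.2 ⟨hkn, le_rfl⟩, ?_⟩
  simpa using pow_pos hx n

theorem Bge_mul_deriv_lt_deriv_mul_Bge {p r j k : ℕ} (hk : 1 ≤ k) (hkj : k ≤ j) (hjp : j ≤ p)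
    (hkr : k ≤ r) (hpr : p + k < j + r) {x : ℝ} (hx : 0 < x) (hx1 : x < 1) :
    k * r.choose k * x ^ (k - 1) * (1 - x) ^ (r - k) * Bge p j x
      < j * p.choose j * x ^ (j - 1) * (1 - x) ^ (p - j) * Bge r k x := by
  obtain ⟨d, rfl⟩ := Nat.exists_eq_add_of_le hkj
  have h1x : 0 < 1 - x := by linarith
  -- both sides expand in the monomials `w i`, the left one after the index shift `b = i + d`
  set w : ℕ → ℝ := fun i => x ^ (k + d - 1 + i) * (1 - x) ^ (p + r - (k + d) - i)
  have hw : ∀ i, 0 < w i := fun i => by positivity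
  have hlhs : k * r.choose k * x ^ (k - 1) * (1 - x) ^ (r - k) * Bge p (k + d) x
      = ∑ i ∈ Icc k (p - d), ((k * r.choose k * p.choose (i + d) : ℕ) : ℝ) * w i := by
    have hIcc : Icc (k + d) p = (Icc k (p - d)).map (addRightEmbedding d) := by
      rw [map_add_right_Icc, Nat.sub_add_cancel (by omega)]
    rw [Bge, mul_sum, hIcc, sum_map]
    refine sum_congr rfl fun i hi => ?_
    rw [mem_Icc] at hi
    simp only [w, addRightEmbedding_apply]
    rw [show k + d - 1 + i = (k - 1) + (i + d) by omega,
      show p + r - (k + d) - i = (r - k) + (p - (i + d)) by omega, pow_add, pow_add]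
    push_cast
    ring
  have hrhs :
      (k + d : ℕ) * p.choose (k + d) * x ^ (k + d - 1) * (1 - x) ^ (p - (k + d)) * Bge r k x =
        ∑ i ∈ Icc k r, (((k + d) * p.choose (k + d) * r.choose i : ℕ) : ℝ) * w i := by
    rw [Bge, mul_sum]
    refine sum_congr rfl fun i hi => ?_
    rw [mem_Icc] at hi
    simp only [w]
    rw [show p + r - (k + d) - i = (p - (k + d)) + (r - i) by omega, pow_add, pow_add]
    push_cast
    ring
  have hcoeff : ∀ i ∈ Icc k (p - d),
      k * r.choose k * p.choose (i + d) ≤ (k + d) * p.choose (k + d) * r.choose i := fun i hi => by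
    rw [mul_assoc, mul_assoc]
    exact Nat.mul_le_mul (Nat.le_add_right k d)
      (Nat.choose_mul_choose_add_le (by omega) (mem_Icc.1 hi).1)
  rw [hlhs, hrhs]
  calc ∑ i ∈ Icc k (p - d), ((k * r.choose k * p.choose (i + d) : ℕ) : ℝ) * w i
      ≤ ∑ i ∈ Icc k (p - d), (((k + d) * p.choose (k + d) * r.choose i : ℕ) : ℝ) * w i :=
        sum_le_sum fun i hi =>
          mul_le_mul_of_nonneg_right (by exact_mod_cast hcoeff i hi) (hw i).le
    _ < ∑ i ∈ Icc k r, (((k + d) * p.choose (k + d) * r.choose i : ℕ) : ℝ) * w i := by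
        refine sum_lt_sum_of_subset (Icc_subset_Icc_right (by omega)) (i := r)
          (mem_Icc.2 ⟨hkr, le_rfl⟩) (by simp only [mem_Icc]; omega) ?_ fun i _ _ => by positivity
        have hcoeff_r : 0 < (k + d) * p.choose (k + d) * r.choose r :=
          Nat.mul_pos (Nat.mul_pos (by omega) (Nat.choose_pos hjp)) (Nat.choose_pos le_rfl)
        exact mul_pos (by exact_mod_cast hcoeff_r) (hw r)

theorem stmt9_general (p r j k : ℕ) (hjp : j ≤ p) (hk1 : 1 ≤ k) (hkr : k ≤ r)
    (hcase : (p < r ∧ k ≤ j) ∨ (p ≤ r ∧ k < j)) :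
    StrictMonoOn (fun x => Bge p j x / Bge r k x) (Set.Ioc (0 : ℝ) 1) := by
  have hG : ∀ x ∈ Set.Ioc (0 : ℝ) 1, Bge r k x ≠ 0 := fun x hx => (Bge_pos hkr hx.1 hx.2).ne'
  refine strictMonoOn_of_deriv_pos (convex_Ioc 0 1)
    ((Bge_continuous p j).continuousOn.div (Bge_continuous r k).continuousOn hG) fun x hx => ?_
  rw [interior_Ioc] at hx
  rw [((Bge_hasDerivAt p j x).fun_div (Bge_hasDerivAt r k x)
    (hG x (Set.Ioo_subset_Ioc_self hx))).deriv]
  have := Bge_mul_deriv_lt_deriv_mul_Bge hk1 (by omega) hjp hkr (by omega) hx.1 hx.2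
  exact div_pos (by linarith) (pow_pos (Bge_pos hkr hx.1 hx.2.le) 2)

theorem stmt9 (p r j k : ℕ) (hj1 : 1 ≤ j) (hjp : j ≤ p) (hk1 : 1 ≤ k) (hkr : k ≤ r)
    (hcase : (p < r ∧ k ≤ j) ∨ (p ≤ r ∧ k < j)) :
    StrictMonoOn (fun x => Bge p j x / Bge r k x) (Set.Ioc (0 : ℝ) 1) :=
  stmt9_general p r j k hjp hk1 hkr hcase
end

section
/- Let 2 ≤ ℓ_1 < ℓ_2 < ⋯ < ℓ_m be integers, let h be a threshold function with h(ℓ_k) = k for each k, and let χ = crit(ℓ_1,…,ℓ_m) be the unique child distribution supported within {0, ℓ_1, …, ℓ_m} for which (χ,h) is m-concordant, with automaton distribution map Ψ. Then χ places strictly positive mass on each of 0, ℓ_1, …, ℓ_m, and there exist nonnegative reals c_{m+1}, …, c_{ℓ_m} with Σ_{r=m+1}^{ℓ_m} c_r = 1 such that for all x ∈ [0,1], x − Ψ(x) = χ(0) · Σ_{r=m+1}^{ℓ_m} c_r · B≥_{ℓ_m, r}(x); that is, (x − Ψ(x))/χ(0) is a convex combination of the polynomials B≥_{ℓ_m, r}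 for r ∈ {m+1, …, ℓ_m}. -/
/-- `Ψ` is `m`-concordant: the first `m` derivatives of `Ψ` at `0` (within `[0,1]`)
match those of the identity, i.e. `Ψ'(0) = 1` and `Ψ^{(k)}(0) = 0` for `2 ≤ k ≤ m`.
(For `m = 0` the condition is vacuous.) -/
def Concordant (m : ℕ) (Ψ : ℝ → ℝ) : Prop :=
  (1 ≤ m → iteratedDerivWithin 1 Ψ (Set.Icc (0 : ℝ) 1) 0 = 1) ∧
  ∀ k, 2 ≤ k → k ≤ m → iteratedDerivWithin k Ψ (Set.Icc (0 : ℝ) 1) 0 = 0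

/-!
`Ψ` is the polynomial `∑ₖ χ(ℓₖ) B≥_{ℓₖ,k}`, and `Ψ' = ∑ₖ aₖ x^{k-1} (1-x)^{ℓₖ-k}` with
`aₖ = k C(ℓₖ,k) χ(ℓₖ)`; concordance says that `1 - Ψ'` vanishes to order `m` at `0`.
By induction on `k`, `Gₖ = 1 - ∑_{j ≤ k} aⱼ x^{j-1} (1-x)^{ℓⱼ-j}` has positive Bernstein
coefficients of indices `k, …, ℓₖ - 1` in degree `ℓₖ - 1`: degree elevation to `ℓ_{k+1} - 1`
keeps them positive, and as `G_{k+1}` has no `x^k` term, `a_{k+1}` is the lowest of them.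
Integrating `1 - Ψ' = Gₘ` with `(B≥_{N,r})' = r C(N,r) x^{r-1} (1-x)^{N-r}` writes `x - Ψ` as a
positive combination of the `B≥_{ℓₘ,r}`, `r > m`, and evaluating at `x = 1` shows that its
total weight is `χ(0)`.
-/

open Polynomial Finset

/-- Positivity of Bernstein coefficients does not see the binomial normalisation, so the basis
`X ^ s * (1 - X) ^ (n - s)` is used unnormalised. -/
def HasPosBernsteinCoeffs (n a : ℕ) (p : ℝ[X]) : Prop :=
  ∃ e : ℕ → ℝ, (∀ s, 0 ≤ e s) ∧ (∀ s ∈ Icc a n, 0 < e s) ∧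
    p = ∑ s ∈ Icc a n, C (e s) * (X ^ s * (1 - X) ^ (n - s))

lemma coeff_X_pow_mul_one_sub_X_pow_self (s t : ℕ) :
    ((X : ℝ[X]) ^ s * (1 - X) ^ t).coeff s = 1 := by
  simp [coeff_X_pow_mul', coeff_zero_eq_eval_zero]

lemma coeff_X_pow_mul_one_sub_X_pow_of_lt {s k : ℕ} (t : ℕ) (h : k < s) :
    ((X : ℝ[X]) ^ s * (1 - X) ^ t).coeff k = 0 := by
  simp [coeff_X_pow_mul', Nat.not_le.mpr h]

namespace HasPosBernsteinCoeffs

variable {n a : ℕ} {p : ℝ[X]}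

lemma one : HasPosBernsteinCoeffs 0 0 1 :=
  ⟨fun _ ↦ 1, fun _ ↦ zero_le_one, fun _ _ ↦ one_pos, by simp⟩

/-- Degree elevation: multiply by `X + (1 - X) = 1`. -/
lemma succ_degree (h : HasPosBernsteinCoeffs n a p) (ha : a ≤ n) :
    HasPosBernsteinCoeffs (n + 1) a p := by
  obtain ⟨e, he0, hepos, rfl⟩ := h
  set f : ℕ → ℝ := fun s ↦ if a < s then e (s - 1) else 0
  set g : ℕ → ℝ := fun s ↦ if s ≤ n then e s else 0
  have hf0 (s : ℕ) : 0 ≤ f s := by unfold f; split_ifs <;> simp [he0]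
  have hg0 (s : ℕ) : 0 ≤ g s := by unfold g; split_ifs <;> simp [he0]
  have hsum_f : ∑ s ∈ Icc a (n + 1), C (f s) * (X ^ s * (1 - X) ^ (n + 1 - s)) =
      ∑ s ∈ Icc a n, C (e s) * (X ^ (s + 1) * (1 - X) ^ (n - s)) := by
    rw [← insert_Icc_add_one_left_eq_Icc (by omega), sum_insert (by simp),
      ← map_add_right_Icc, sum_map, show f a = 0 from if_neg (lt_irrefl a), C_0, zero_mul,
      zero_add]
    refine sum_congr rfl fun s hs ↦ ?_
    have hfs : f (s + 1) = e s := if_pos (Nat.lt_succ_of_le (mem_Icc.1 hs).1)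
    simp only [addRightEmbedding_apply, hfs, Nat.add_sub_add_right]
  have hsum_g : ∑ s ∈ Icc a (n + 1), C (g s) * (X ^ s * (1 - X) ^ (n + 1 - s)) =
      ∑ s ∈ Icc a n, C (e s) * (X ^ s * (1 - X) ^ (n + 1 - s)) := by
    rw [← insert_Icc_right_eq_Icc_add_one (by omega), sum_insert (by simp),
      show g (n + 1) = 0 from if_neg (by omega), C_0, zero_mul, zero_add]
    exact sum_congr rfl fun s hs ↦ by rw [show g s = e s from if_pos (mem_Icc.1 hs).2]
  refine ⟨f + g, fun s ↦ add_nonneg (hf0 s) (hg0 s), fun s hs ↦ ?_, ?_⟩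
  · rw [mem_Icc] at hs
    rcases hs.2.lt_or_eq with hsn | rfl
    · rw [Pi.add_apply, show g s = e s from if_pos (by omega)]
      exact add_pos_of_nonneg_of_pos (hf0 s) (hepos s (mem_Icc.2 ⟨hs.1, by omega⟩))
    · rw [Pi.add_apply, show f (n + 1) = e n from if_pos (by omega)]
      exact add_pos_of_pos_of_nonneg (hepos n (mem_Icc.2 ⟨ha, le_rfl⟩)) (hg0 _)
  simp only [Pi.add_apply, C_add, add_mul]
  rw [sum_add_distrib, hsum_f, hsum_g, ← sum_add_distrib]
  refine sum_congr rfl fun s hs ↦ ?_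
  rw [Nat.sub_add_comm (mem_Icc.1 hs).2, pow_succ, pow_succ]
  ring

lemma of_le {n' : ℕ} (h : HasPosBernsteinCoeffs n a p) (ha : a ≤ n) (hn : n ≤ n') :
    HasPosBernsteinCoeffs n' a p := by
  induction n', hn using Nat.le_induction with
  | base => exact h
  | succ n' hn ih => exact ih.succ_degree (ha.trans hn)

/-- The coefficient of `X ^ k` is the Bernstein coefficient of index `k`, so `c` must be it. -/
lemma sub_of_coeff_eq_zero {k : ℕ} {c : ℝ} (h : HasPosBernsteinCoeffs n k p) (hk : k ≤ n)
    (hc : (p - C c * (X ^ k * (1 - X) ^ (n - k))).coeff k = 0) :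
    0 < c ∧ HasPosBernsteinCoeffs n (k + 1) (p - C c * (X ^ k * (1 - X) ^ (n - k))) := by
  obtain ⟨e, he0, hepos, rfl⟩ := h
  rw [← insert_Icc_add_one_left_eq_Icc hk, sum_insert (by simp)] at hc ⊢
  set q := ∑ s ∈ Icc (k + 1) n, C (e s) * (X ^ s * (1 - X) ^ (n - s))
  have hq : q.coeff k = 0 := by
    rw [finsetSum_coeff]
    exact sum_eq_zero fun s hs ↦ by
      rw [coeff_C_mul, coeff_X_pow_mul_one_sub_X_pow_of_lt _ (mem_Icc.1 hs).1, mul_zero]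
  have hck : c = e k := by
    simp only [coeff_sub, coeff_add, coeff_C_mul, coeff_X_pow_mul_one_sub_X_pow_self, hq] at hc
    linarith
  subst hck
  refine ⟨hepos k (mem_Icc.2 ⟨le_rfl, hk⟩), e, he0, fun s hs ↦ hepos s ?_, by ring⟩
  exact mem_Icc.2 ⟨(mem_Icc.1 hs).1.trans' k.le_succ, (mem_Icc.1 hs).2⟩

end HasPosBernsteinCoeffs

lemma coeff_sum_Icc_one_succ_eq_of_lt {m k : ℕ} {ℓ : ℕ → ℕ} {a : ℕ → ℝ} (hk : k < m) :
    (∑ j ∈ Icc 1 (k + 1), C (a j) * (X ^ (j - 1) * (1 - X) ^ (ℓ j - j))).coeff k =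
      (∑ j ∈ Icc 1 m, C (a j) * (X ^ (j - 1) * (1 - X) ^ (ℓ j - j))).coeff k := by
  simp only [finsetSum_coeff]
  refine sum_subset (Icc_subset_Icc_right hk) fun j hj hj' ↦ ?_
  have : k < j - 1 := by grind
  rw [coeff_C_mul, coeff_X_pow_mul_one_sub_X_pow_of_lt _ this, mul_zero]

theorem pos_and_hasPosBernsteinCoeffs_of_X_pow_dvd {m : ℕ} {ℓ : ℕ → ℕ} {a : ℕ → ℝ} (hm : 1 ≤ m)
    (hℓ : ∀ k ∈ Icc 1 m, k + 1 ≤ ℓ k) (hmono : MonotoneOn ℓ (Set.Icc 1 m))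
    (hdvd : X ^ m ∣ 1 - ∑ j ∈ Icc 1 m, C (a j) * (X ^ (j - 1) * (1 - X) ^ (ℓ j - j))) :
    (∀ j ∈ Icc 1 m, 0 < a j) ∧ HasPosBernsteinCoeffs (ℓ m - 1) m
      (1 - ∑ j ∈ Icc 1 m, C (a j) * (X ^ (j - 1) * (1 - X) ^ (ℓ j - j))) := by
  set G : ℕ → ℝ[X] := fun k ↦ 1 - ∑ j ∈ Icc 1 k, C (a j) * (X ^ (j - 1) * (1 - X) ^ (ℓ j - j))
  have induction_step (k : ℕ) (hk : k < m) (n : ℕ) (hkn : k ≤ n) (hn : n ≤ ℓ (k + 1) - 1)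
      (hG : HasPosBernsteinCoeffs n k (G k)) :
      0 < a (k + 1) ∧ HasPosBernsteinCoeffs (ℓ (k + 1) - 1) (k + 1) (G (k + 1)) := by
    have hG_succ : G (k + 1) = G k - C (a (k + 1)) * (X ^ k * (1 - X) ^ (ℓ (k + 1) - 1 - k)) := by
      simp only [G, sum_Icc_succ_top (Nat.le_add_left 1 k), Nat.add_sub_cancel, Nat.sub_sub,
        Nat.add_comm 1 k]
      ring
    have hcoeff : (G (k + 1)).coeff k = 0 := by
      have := X_pow_dvd_iff.1 hdvd k hk
      rwa [coeff_sub, ← coeff_sum_Icc_one_succ_eq_of_lt hk, ← coeff_sub] at this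
    rw [hG_succ] at hcoeff ⊢
    exact (hG.of_le hkn hn).sub_of_coeff_eq_zero (by omega) hcoeff
  suffices ∀ k, 1 ≤ k → k ≤ m → (∀ j ∈ Icc 1 k, 0 < a j) ∧
      HasPosBernsteinCoeffs (ℓ k - 1) k (G k) from this m hm le_rfl
  intro k hk
  induction k, hk using Nat.le_induction with
  | base =>
    intro _
    have h1 : HasPosBernsteinCoeffs 0 0 (G 0) := by simpa [G] using HasPosBernsteinCoeffs.one
    obtain ⟨ha, hG⟩ := induction_step 0 hm 0 le_rfl (Nat.zero_le _) h1
    exact ⟨fun j hj ↦ by rwa [show j = 1 by simpa using hj], hG⟩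
  | succ k hk ih =>
    intro hkm
    obtain ⟨ha, hG⟩ := ih (by omega)
    have hk' : k ∈ Icc 1 m := mem_Icc.2 ⟨hk, by omega⟩
    have hk1 : k + 1 ∈ Set.Icc 1 m := Set.mem_Icc.2 ⟨by omega, hkm⟩
    obtain ⟨ha1, hG1⟩ := induction_step k hkm (ℓ k - 1) (by have := hℓ k hk'; omega)
      (Nat.sub_le_sub_right (hmono (coe_Icc 1 m ▸ hk') hk1 k.le_succ) 1) hG
    refine ⟨fun j hj ↦ ?_, hG1⟩
    rcases (mem_Icc.1 hj).2.lt_or_eq with hjk | rfl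
    · exact ha j (mem_Icc.2 ⟨(mem_Icc.1 hj).1, by omega⟩)
    · exact ha1

noncomputable def bgePoly (n k : ℕ) : ℝ[X] :=
  ∑ j ∈ Icc k n, C (n.choose j : ℝ) * (X ^ j * (1 - X) ^ (n - j))

lemma eval_bgePoly (n k : ℕ) (x : ℝ) : (bgePoly n k).eval x = Bge n k x := by
  simp [bgePoly, Bge, eval_finsetSum, mul_assoc]

lemma bgePoly_eq_add {n k : ℕ} (h : k ≤ n) :
    bgePoly n k = C (n.choose k : ℝ) * (X ^ k * (1 - X) ^ (n - k)) + bgePoly n (k + 1) := by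
  rw [bgePoly, ← insert_Icc_add_one_left_eq_Icc h, sum_insert (by simp), bgePoly]

lemma derivative_bgePoly {n k : ℕ} (h : k ≤ n) :
    derivative (bgePoly n k) = C (k * n.choose k : ℝ) * (X ^ (k - 1) * (1 - X) ^ (n - k)) := by
  induction hd : n - k generalizing k with
  | zero =>
    obtain rfl : k = n := by omega
    simp [bgePoly, derivative_X_pow]
  | succ t ih =>
    have hkn : k < n := by omega
    rw [bgePoly_eq_add h, derivative_add, ih hkn (by omega)]
    have hchoose : ((k + 1 : ℕ) * n.choose (k + 1) : ℝ) = n.choose k * (n - k : ℕ) := by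
      rw [mul_comm]; exact_mod_cast Nat.choose_succ_right_eq n k
    simp only [derivative_mul, derivative_C, derivative_pow, derivative_sub, derivative_one,
      derivative_X, Nat.succ_eq_add_one, Nat.add_sub_cancel, hchoose, map_mul, hd]
    ring

lemma eval_one_bgePoly {n k : ℕ} (h : k ≤ n) : (bgePoly n k).eval 1 = 1 := by
  rw [bgePoly, eval_finsetSum, sum_eq_single_of_mem n (mem_Icc.2 ⟨h, le_rfl⟩)]
  · simp
  · intro j hj hjn
    simp [Nat.sub_ne_zero_of_lt (lt_of_le_of_ne (mem_Icc.1 hj).2 hjn)]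

lemma eval_one_sum_C_mul_bgePoly {s : Finset ℕ} {w : ℕ → ℝ} {n : ℕ → ℕ} (h : ∀ k ∈ s, k ≤ n k) :
    (∑ k ∈ s, C (w k) * bgePoly (n k) k).eval 1 = ∑ k ∈ s, w k := by
  rw [eval_finsetSum]
  exact sum_congr rfl fun k hk ↦ by rw [eval_mul, eval_C, eval_one_bgePoly (h k hk), mul_one]

lemma coeff_zero_bgePoly {n k : ℕ} (h : 1 ≤ k) : (bgePoly n k).coeff 0 = 0 := by
  rw [coeff_zero_eq_eval_zero, bgePoly, eval_finsetSum]
  exact sum_eq_zero fun j hj ↦ by simp [show j ≠ 0 by grind]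

lemma HasPosBernsteinCoeffs.exists_eq_derivative {n m : ℕ} {q : ℝ[X]}
    (h : HasPosBernsteinCoeffs n m q) :
    ∃ b : ℕ → ℝ, (∀ r, 0 ≤ b r) ∧ (∀ r ∈ Icc (m + 1) (n + 1), 0 < b r) ∧
      q = derivative (∑ r ∈ Icc (m + 1) (n + 1), C (b r) * bgePoly (n + 1) r) := by
  obtain ⟨e, he0, hepos, rfl⟩ := h
  have hnorm {r : ℕ} (hr : r ∈ Icc (m + 1) (n + 1)) : (0 : ℝ) < r * (n + 1).choose r := by
    have := Nat.choose_pos (mem_Icc.1 hr).2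
    have : 0 < r := by grind
    positivity
  refine ⟨fun r ↦ e (r - 1) / (r * (n + 1).choose r), fun r ↦ div_nonneg (he0 _) (by positivity),
    fun r hr ↦ div_pos (hepos _ (mem_Icc.2 (by grind))) (hnorm hr), ?_⟩
  rw [derivative_sum, ← map_add_right_Icc, sum_map]
  refine sum_congr rfl fun s hs ↦ ?_
  have hs' : s + 1 ∈ Icc (m + 1) (n + 1) := by grind
  simp only [addRightEmbedding_apply, derivative_C_mul]
  rw [derivative_bgePoly (mem_Icc.1 hs').2, Nat.add_sub_cancel, Nat.add_sub_add_right]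
  conv_rhs => rw [← mul_assoc, ← C_mul, div_mul_cancel₀ _ (hnorm hs').ne']

lemma Polynomial.eq_of_derivative_eq_of_coeff_zero_eq {R : Type*} [Ring R] [IsAddTorsionFree R]
    {p q : R[X]} (hd : derivative p = derivative q) (h0 : p.coeff 0 = q.coeff 0) : p = q := by
  have := eq_C_of_derivative_eq_zero (p := p - q) (by rw [derivative_sub, hd, sub_self])
  rwa [coeff_sub, h0, sub_self, map_zero, sub_eq_zero] at this

theorem pos_and_exists_X_sub_sum_bgePoly_eq {m : ℕ} {ℓ : ℕ → ℕ} {w : ℕ → ℝ} (hm : 1 ≤ m)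
    (hℓ : ∀ k ∈ Icc 1 m, k + 1 ≤ ℓ k) (hmono : MonotoneOn ℓ (Set.Icc 1 m))
    (hdvd : X ^ m ∣ 1 - derivative (∑ k ∈ Icc 1 m, C (w k) * bgePoly (ℓ k) k)) :
    (∀ k ∈ Icc 1 m, 0 < w k) ∧ ∃ b : ℕ → ℝ, (∀ r, 0 ≤ b r) ∧ (∀ r ∈ Icc (m + 1) (ℓ m), 0 < b r) ∧
      X - ∑ k ∈ Icc 1 m, C (w k) * bgePoly (ℓ k) k =
        ∑ r ∈ Icc (m + 1) (ℓ m), C (b r) * bgePoly (ℓ m) r := by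
  have hnorm {k : ℕ} (hk : k ∈ Icc 1 m) : (0 : ℝ) < k * (ℓ k).choose k := by
    have := Nat.choose_pos (hℓ k hk |>.trans' k.le_succ)
    have : 0 < k := (mem_Icc.1 hk).1
    positivity
  have hderiv : derivative (∑ k ∈ Icc 1 m, C (w k) * bgePoly (ℓ k) k) =
      ∑ k ∈ Icc 1 m, C (w k * (k * (ℓ k).choose k)) * (X ^ (k - 1) * (1 - X) ^ (ℓ k - k)) := by
    rw [derivative_sum]
    refine sum_congr rfl fun k hk ↦ ?_
    rw [derivative_C_mul, derivative_bgePoly (hℓ k hk |>.trans' k.le_succ), ← mul_assoc, ← C_mul]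
  rw [hderiv] at hdvd
  obtain ⟨hpos, hbern⟩ := pos_and_hasPosBernsteinCoeffs_of_X_pow_dvd hm hℓ hmono hdvd
  have hℓm : ℓ m - 1 + 1 = ℓ m := Nat.sub_add_cancel (by grind)
  obtain ⟨b, hb0, hbpos, hb⟩ := hbern.exists_eq_derivative
  rw [hℓm] at hbpos hb
  refine ⟨fun k hk ↦ pos_of_mul_pos_left (hpos k hk) (hnorm hk).le, b, hb0, hbpos, ?_⟩
  refine eq_of_derivative_eq_of_coeff_zero_eq (by rw [derivative_sub, derivative_X, hderiv, hb]) ?_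
  simp only [coeff_sub, coeff_X_zero, finsetSum_coeff, coeff_C_mul]
  rw [sum_eq_zero fun k hk ↦ by rw [coeff_zero_bgePoly (mem_Icc.1 hk).1, mul_zero],
    sum_eq_zero fun r hr ↦ by rw [coeff_zero_bgePoly (by grind), mul_zero], sub_zero]

lemma tsum_eq_add_sum_Icc {M : Type*} [AddCommMonoid M] [TopologicalSpace M] {m : ℕ}
    {ℓ : ℕ → ℕ} {f : ℕ → M} (hinj : Set.InjOn ℓ (Set.Icc 1 m)) (hℓ : ∀ k ∈ Icc 1 m, ℓ k ≠ 0)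
    (hf : ∀ n, f n ≠ 0 → n = 0 ∨ ∃ k, 1 ≤ k ∧ k ≤ m ∧ ℓ k = n) :
    ∑' n, f n = f 0 + ∑ k ∈ Icc 1 m, f (ℓ k) := by
  have h0 : 0 ∉ (Icc 1 m).image ℓ := by
    simp only [mem_image, not_exists, not_and]
    exact fun k hk ↦ hℓ k hk
  rw [← sum_image (by simpa using hinj), ← sum_insert h0]
  refine tsum_eq_sum fun n hn ↦ by_contra fun hfn ↦ hn ?_
  rcases hf n hfn with rfl | ⟨k, hk1, hkm, rfl⟩
  · exact mem_insert_self 0 _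
  · exact mem_insert_of_mem (mem_image_of_mem ℓ (mem_Icc.2 ⟨hk1, hkm⟩))

lemma iteratedDerivWithin_eval {s : Set ℝ} (hs : UniqueDiffOn ℝ s) (p : ℝ[X]) (k : ℕ) {x : ℝ}
    (hx : x ∈ s) : iteratedDerivWithin k (fun y ↦ p.eval y) s x = (derivative^[k] p).eval x := by
  induction k generalizing x with
  | zero => simp
  | succ k ih =>
    rw [iteratedDerivWithin_succ, derivWithin_congr (fun y hy ↦ ih hy) (ih hx),
      Polynomial.derivWithin _ (hs x hx), Function.iterate_succ_apply']

lemma iteratedDerivWithin_Icc_eval_zero (p : ℝ[X]) (k : ℕ) :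
    iteratedDerivWithin k (fun y ↦ p.eval y) (Set.Icc 0 1) 0 = k.factorial * p.coeff k := by
  rw [iteratedDerivWithin_eval uniqueDiffOn_Icc_zero_one p k (by simp), ← coeff_zero_eq_eval_zero,
    coeff_iterate_derivative, zero_add, Nat.descFactorial_self, nsmul_eq_mul, mul_comm]

lemma X_pow_dvd_one_sub_derivative_of_concordant {m : ℕ} {p : ℝ[X]}
    (h : Concordant m (fun x ↦ p.eval x)) : X ^ m ∣ 1 - derivative p := by
  refine X_pow_dvd_iff.2 fun d hd ↦ ?_
  rw [coeff_sub, coeff_derivative, coeff_one]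
  rcases d with _ | d
  · have := h.1 (by omega)
    rw [iteratedDerivWithin_Icc_eval_zero] at this
    simp_all
  · have := h.2 (d + 2) (by omega) (by omega)
    rw [iteratedDerivWithin_Icc_eval_zero, mul_eq_zero] at this
    simp [this.resolve_left (by positivity)]

lemma add_one_le_of_strictMonoOn {m : ℕ} {ℓ : ℕ → ℕ} (hℓ1 : 2 ≤ ℓ 1)
    (hℓ : StrictMonoOn ℓ (Set.Icc 1 m)) : ∀ k ∈ Icc 1 m, k + 1 ≤ ℓ k := by
  intro k hk
  obtain ⟨hk1, hkm⟩ := mem_Icc.1 hk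
  clear hk
  induction k, hk1 using Nat.le_induction with
  | base => exact hℓ1
  | succ k hk1 ih =>
    have := hℓ ⟨hk1, by omega⟩ ⟨by omega, hkm⟩ k.lt_succ_self
    have := ih (by omega)
    omega

lemma Psi_eq_eval_sum_bgePoly {m : ℕ} {ℓ h : ℕ → ℕ} {χ : ℕ → ℝ} (hh0 : 1 ≤ h 0)
    (hhℓ : ∀ k, 1 ≤ k → k ≤ m → h (ℓ k) = k) (hinj : Set.InjOn ℓ (Set.Icc 1 m))
    (hℓ : ∀ k ∈ Icc 1 m, ℓ k ≠ 0)
    (hsupp : ∀ n, χ n ≠ 0 → n = 0 ∨ ∃ k, 1 ≤ k ∧ k ≤ m ∧ ℓ k = n) (x : ℝ) :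
    Psi χ h x = (∑ k ∈ Icc 1 m, C (χ (ℓ k)) * bgePoly (ℓ k) k).eval x := by
  rw [Psi, tsum_eq_add_sum_Icc hinj hℓ fun n hn ↦ hsupp n (left_ne_zero_of_mul hn),
    Bge, Icc_eq_empty_of_lt hh0, sum_empty, mul_zero, zero_add, eval_finsetSum]
  refine sum_congr rfl fun k hk ↦ ?_
  rw [hhℓ k (mem_Icc.1 hk).1 (mem_Icc.1 hk).2, eval_mul, eval_C, eval_bgePoly]

theorem stmt11 (m : ℕ) (hm : 1 ≤ m) (ℓ : ℕ → ℕ) (h : ℕ → ℕ)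
    (hℓ1 : 2 ≤ ℓ 1)
    (hinc : ∀ k, 1 ≤ k → k < m → ℓ k < ℓ (k + 1))
    (hh : ∀ n, 1 ≤ h n)
    (hhℓ : ∀ k, 1 ≤ k → k ≤ m → h (ℓ k) = k)
    (χ : ℕ → ℝ) (hχ : IsChildDist χ)
    (hsupp : ∀ n, χ n ≠ 0 → n = 0 ∨ ∃ k, 1 ≤ k ∧ k ≤ m ∧ ℓ k = n)
    (hconc : Concordant m (Psi χ h)) :
    0 < χ 0 ∧ (∀ k, 1 ≤ k → k ≤ m → 0 < χ (ℓ k)) ∧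
    ∃ c : ℕ → ℝ, (∀ r, 0 ≤ c r) ∧
      (∑ r ∈ Finset.Icc (m + 1) (ℓ m), c r) = 1 ∧
      ∀ x ∈ Set.Icc (0 : ℝ) 1,
        x - Psi χ h x = χ 0 * ∑ r ∈ Finset.Icc (m + 1) (ℓ m), c r * Bge (ℓ m) r x := by
  have hmono : StrictMonoOn ℓ (Set.Icc 1 m) :=
    strictMonoOn_of_lt_add_one Set.ordConnected_Icc fun k _ hk hk1 ↦ hinc k hk.1 hk1.2
  have hℓ := add_one_le_of_strictMonoOn hℓ1 hmono
  have hℓ0 (k : ℕ) (hk : k ∈ Icc 1 m) : ℓ k ≠ 0 := ((hℓ k hk).trans_lt' k.succ_pos).ne'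
  set Ψp := ∑ k ∈ Icc 1 m, C (χ (ℓ k)) * bgePoly (ℓ k) k
  have hΨ : Psi χ h = fun x ↦ Ψp.eval x :=
    funext (Psi_eq_eval_sum_bgePoly (hh 0) hhℓ hmono.injOn hℓ0 hsupp)
  have hdvd := X_pow_dvd_one_sub_derivative_of_concordant (hΨ ▸ hconc)
  obtain ⟨hpos, b, hb0, hbpos, hb⟩ := pos_and_exists_X_sub_sum_bgePoly_eq hm hℓ hmono.monotoneOn hdvd
  have hmass : χ 0 + ∑ k ∈ Icc 1 m, χ (ℓ k) = 1 :=
    (tsum_eq_add_sum_Icc hmono.injOn hℓ0 hsupp).symm.trans hχ.2.2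
  have hχ0 : χ 0 = ∑ r ∈ Icc (m + 1) (ℓ m), b r := by
    have := congrArg (eval 1) hb
    rw [eval_sub, eval_X, eval_one_sum_C_mul_bgePoly fun k hk ↦ (hℓ k hk).trans' k.le_succ,
      eval_one_sum_C_mul_bgePoly fun r hr ↦ (mem_Icc.1 hr).2] at this
    linarith
  have hχ0pos : 0 < χ 0 :=
    hχ0 ▸ sum_pos hbpos ⟨m + 1, mem_Icc.2 ⟨le_rfl, hℓ m (mem_Icc.2 ⟨hm, le_rfl⟩)⟩⟩
  refine ⟨hχ0pos, fun k hk1 hkm ↦ hpos k (mem_Icc.2 ⟨hk1, hkm⟩), fun r ↦ b r / χ 0,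
    fun r ↦ div_nonneg (hb0 r) hχ0pos.le, by rw [← sum_div, ← hχ0, div_self hχ0pos.ne'],
    fun x _ ↦ ?_⟩
  calc x - Psi χ h x = (X - Ψp).eval x := by rw [hΨ, eval_sub, eval_X]
    _ = χ 0 * ∑ r ∈ Icc (m + 1) (ℓ m), b r / χ 0 * Bge (ℓ m) r x := by
      rw [hb, eval_finsetSum, mul_sum]
      refine sum_congr rfl fun r _ ↦ ?_
      rw [eval_mul, eval_C, eval_bgePoly]
      field_simp
end

section
/- Let h: ℕ → ℕ be any function, let t be a locally finite rooted tree, and let s be an admissible subtree of t with respect to h. Then there exists a subtree s' ⊆ s that is also an admissible subtree of t with respect to h and which satisfies n_{s'}(v) = h(n_t(v)) for every vertex v ∈ s'. -/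
/-- A rooted tree, modeled as a prefix-closed set of finite sequences of naturals
containing the empty sequence (the root). -/
def IsTree (t : Set (List ℕ)) : Prop :=
  [] ∈ t ∧ ∀ v ∈ t, ∀ u : List ℕ, u <+: v → u ∈ t

/-- The number of children of the vertex `v` in the tree `t`. -/
noncomputable def nChildren (t : Set (List ℕ)) (v : List ℕ) : ℕ :=
  {i : ℕ | v ++ [i] ∈ t}.ncard

/-- `s` is an admissible subtree of `t` with respect to the threshold function `h`:
it is a subtree of `t` containing the root, and every `v ∈ s` has at least
`h(n_t(v))` children inside `s`. -/
def IsAdmissible (h : ℕ → ℕ) (t s : Set (List ℕ)) : Prop :=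
  s ⊆ t ∧ IsTree s ∧ ∀ v ∈ s, h (nChildren t v) ≤ nChildren s v

/-! Choose, at every vertex `v` of `s`, exactly `h(n_t(v))` of its children in `s`, and keep the
vertices reached from the root by chosen steps only. At a kept vertex the children are exactly
the chosen ones, so the count is `h(n_t(v))` on the nose. -/

def treeOfChildren (F : List ℕ → Set ℕ) : Set (List ℕ) :=
  {v | ∀ u i, u ++ [i] <+: v → i ∈ F u}

section treeOfChildren

variable {F : List ℕ → Set ℕ}

theorem isTree_treeOfChildren : IsTree (treeOfChildren F) := by
  refine ⟨fun u i hu => ?_, fun v hv w hwv u i hu => hv u i (hu.trans hwv)⟩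
  simpa using hu.length_le

theorem append_singleton_mem_treeOfChildren {v : List ℕ} {i : ℕ} :
    v ++ [i] ∈ treeOfChildren F ↔ v ∈ treeOfChildren F ∧ i ∈ F v := by
  simp only [treeOfChildren, Set.mem_ofPred_eq, List.prefix_concat_iff]
  refine ⟨fun hv => ⟨fun u j hu => hv u j (Or.inr hu), hv v i (Or.inl rfl)⟩, ?_⟩
  rintro ⟨hv, hi⟩ u j (huv | hu)
  · obtain ⟨rfl, hji⟩ := List.append_inj' huv rfl
    rwa [List.singleton_inj.mp hji]
  · exact hv u j hu

theorem treeOfChildren_subset {s : Set (List ℕ)} (hroot : [] ∈ s)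
    (hF : ∀ v ∈ s, ∀ i ∈ F v, v ++ [i] ∈ s) : treeOfChildren F ⊆ s := by
  intro v
  induction v using List.reverseRecOn with
  | nil => exact fun _ => hroot
  | append_singleton v i ih =>
    rw [append_singleton_mem_treeOfChildren]
    exact fun ⟨hv, hi⟩ => hF v (ih hv) i hi

theorem nChildren_treeOfChildren {v : List ℕ} (hv : v ∈ treeOfChildren F) :
    nChildren (treeOfChildren F) v = (F v).ncard := by
  simp only [nChildren, append_singleton_mem_treeOfChildren, hv, true_and, Set.ofPred_mem_eq]

end treeOfChildren

theorem exists_children_subset_ncard_eq {s : Set (List ℕ)} {g : List ℕ → ℕ}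
    (hg : ∀ v ∈ s, g v ≤ nChildren s v) :
    ∃ F : List ℕ → Set ℕ, ∀ v ∈ s, F v ⊆ {i | v ++ [i] ∈ s} ∧ (F v).ncard = g v := by
  have hchoice : ∀ v, ∃ A ⊆ {i | v ++ [i] ∈ s}, v ∈ s → A.ncard = g v := by
    intro v
    by_cases hv : v ∈ s
    · obtain ⟨A, hA, hcard⟩ := Set.exists_subset_card_eq (hg v hv)
      exact ⟨A, hA, fun _ => hcard⟩
    · exact ⟨∅, Set.empty_subset _, fun hv' => absurd hv' hv⟩
  choose F hFs hFcard using hchoice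
  exact ⟨F, fun v hv => ⟨hFs v, hFcard v hv⟩⟩

theorem stmt19_general (h : ℕ → ℕ) (t : Set (List ℕ))
    (s : Set (List ℕ)) (hs : IsAdmissible h t s) :
    ∃ s' : Set (List ℕ), s' ⊆ s ∧ IsAdmissible h t s' ∧
      ∀ v ∈ s', nChildren s' v = h (nChildren t v) := by
  obtain ⟨hst, ⟨hroot, -⟩, hadm⟩ := hs
  obtain ⟨F, hF⟩ := exists_children_subset_ncard_eq hadm
  have hsub : treeOfChildren F ⊆ s :=
    treeOfChildren_subset hroot fun v hv _ hi => (hF v hv).1 hi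
  have hcount : ∀ v ∈ treeOfChildren F, nChildren (treeOfChildren F) v = h (nChildren t v) :=
    fun v hv => (nChildren_treeOfChildren hv).trans (hF v (hsub hv)).2
  exact ⟨treeOfChildren F, hsub,
    ⟨hsub.trans hst, isTree_treeOfChildren, fun v hv => (hcount v hv).ge⟩, hcount⟩

theorem stmt19 (h : ℕ → ℕ) (t : Set (List ℕ)) (ht : IsTree t)
    (hlf : ∀ v ∈ t, {i : ℕ | v ++ [i] ∈ t}.Finite)
    (s : Set (List ℕ)) (hs : IsAdmissible h t s) :
    ∃ s' : Set (List ℕ), s' ⊆ s ∧ IsAdmissible h t s' ∧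
      ∀ v ∈ s', nChildren s' v = h (nChildren t v) :=
  stmt19_general h t s hs
end
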